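/- Let f : [a,b] → ℝ be of bounded variation on [a,b]. Then |( f(a) + f(b) )/2 − (1/(b−a))∫_a^b f(t) dt| ≤ (1/2)·V_a^b(f) − (1/(b−a)) ∫_a^{(a+b)/2} V_t^{a+b−t}(f) dt ≤ (1/2)·V_a^b(f). -/

import Mathlib

open Set

/-- Total variation of `f` on the interval `[c, d]`. -/
noncomputable def V (f : ℝ → ℝ) (c d : ℝ) : ℝ := (eVariationOn f (Set.Icc c d)).toReal

lemma V_nonneg (f : ℝ → ℝ) (c d : ℝ) : 0 ≤ V f c d := ENNReal.toReal_nonneg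

lemma V_mono {f : ℝ → ℝ} {c d c' d' : ℝ} (h : Icc c d ⊆ Icc c' d')
    (hfin : eVariationOn f (Icc c' d') ≠ ⊤) : V f c d ≤ V f c' d' :=
  ENNReal.toReal_mono hfin (eVariationOn.mono f h)

lemma abs_sub_le_V {f : ℝ → ℝ} {c d x y : ℝ} (hfin : eVariationOn f (Icc c d) ≠ ⊤)
    (hx : x ∈ Icc c d) (hy : y ∈ Icc c d) : |f x - f y| ≤ V f c d := by
  have h := eVariationOn.edist_le f hx hy
  have he : edist (f x) (f y) = ENNReal.ofReal |f x - f y| := by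
    rw [edist_dist, Real.dist_eq]
  rw [he] at h
  have := ENNReal.toReal_mono hfin h
  rwa [ENNReal.toReal_ofReal (abs_nonneg _)] at this

lemma V_add {f : ℝ → ℝ} {c d e : ℝ} (hcd : c ≤ d) (hde : d ≤ e)
    (hfin : eVariationOn f (Icc c e) ≠ ⊤) : V f c d + V f d e = V f c e := by
  have key := eVariationOn.Icc_add_Icc f (s := Icc c e) hcd hde ⟨hcd, hde⟩
  have h1 : Icc c e ∩ Icc c d = Icc c d := inter_eq_right.2 (Icc_subset_Icc le_rfl hde)
  have h2 : Icc c e ∩ Icc d e = Icc d e := inter_eq_right.2 (Icc_subset_Icc hcd le_rfl)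
  have h3 : Icc c e ∩ Icc c e = Icc c e := inter_self _
  rw [h1, h2, h3] at key
  have f1 : eVariationOn f (Icc c d) ≠ ⊤ :=
    ne_top_of_le_ne_top hfin (eVariationOn.mono f (Icc_subset_Icc le_rfl hde))
  have f2 : eVariationOn f (Icc d e) ≠ ⊤ :=
    ne_top_of_le_ne_top hfin (eVariationOn.mono f (Icc_subset_Icc hcd le_rfl))
  rw [V, V, V, ← key, ENNReal.toReal_add f1 f2]

/-- Refined trapezoid inequality for functions of bounded variation. -/
theorem refined_trapezoid_bv (a b : ℝ) (hab : a < b) (f : ℝ → ℝ)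
    (hf : BoundedVariationOn f (Icc a b)) :
    |(f a + f b) / 2 - (1 / (b - a)) * ∫ t in a..b, f t| ≤
        (1 / 2) * V f a b - (1 / (b - a)) * ∫ t in a..((a + b) / 2), V f t (a + b - t) ∧
      (1 / 2) * V f a b - (1 / (b - a)) * (∫ t in a..((a + b) / 2), V f t (a + b - t)) ≤
        (1 / 2) * V f a b := by
  set m : ℝ := (a + b) / 2 with hm
  have ham : a ≤ m := by rw [hm]; linarith
  have hmb : m ≤ b := by rw [hm]; linarith
  have hba : (0:ℝ) < b - a := by linarith
  have hfin : eVariationOn f (Icc a b) ≠ ⊤ := hf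
  have hfin' : ∀ c d, a ≤ c → d ≤ b → eVariationOn f (Icc c d) ≠ ⊤ := fun c d hac hdb =>
    ne_top_of_le_ne_top hfin (eVariationOn.mono f (Icc_subset_Icc hac hdb))
  -- integrability of f on subintervals
  obtain ⟨p, q, hp, hq, hpq⟩ := hf.locallyBoundedVariationOn.exists_monotoneOn_sub_monotoneOn
  have hfint : ∀ c d, a ≤ c → c ≤ d → d ≤ b →
      IntervalIntegrable f MeasureTheory.volume c d := by
    intro c d hac hcd hdb
    have hsub : uIcc c d ⊆ Icc a b := by
      rw [uIcc_of_le hcd]; exact Icc_subset_Icc hac hdb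
    have hip := (hp.mono hsub).intervalIntegrable (μ := MeasureTheory.volume)
    have hiq := (hq.mono hsub).intervalIntegrable (μ := MeasureTheory.volume)
    rw [hpq]; exact hip.sub hiq
  -- integrability of the reflected function
  have hrefl : IntervalIntegrable (fun t => f (a + b - t)) MeasureTheory.volume a m := by
    have h := (hfint m b ham hmb le_rfl).comp_sub_left (a + b)
    have e1 : a + b - m = m := by rw [hm]; ring
    have e2 : a + b - b = a := by ring
    rw [e1, e2] at h
    exact h.symm
  -- the function t ↦ V f t (a+b-t) is antitone on [a, m]
  have hVanti : AntitoneOn (fun t => V f t (a + b - t)) (Icc a m) := by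
    intro x hx y hy hxy
    exact V_mono (Icc_subset_Icc hxy (by linarith)) (hfin' x (a + b - x) hx.1 (by linarith [hx.1]))
  have hVint : IntervalIntegrable (fun t => V f t (a + b - t)) MeasureTheory.volume a m := by
    apply AntitoneOn.intervalIntegrable
    rwa [uIcc_of_le ham]
  -- the auxiliary function g
  set g : ℝ → ℝ := fun t => f a + f b - f t - f (a + b - t) with hg
  have hgint : IntervalIntegrable g MeasureTheory.volume a m :=
    ((intervalIntegrable_const.sub (hfint a m le_rfl ham hmb)).sub hrefl)
  -- pointwise bound: |g t| ≤ V f a b - V f t (a+b-t) for t ∈ [a, m]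
  have hpt : ∀ t ∈ Icc a m, |g t| ≤ V f a b - V f t (a + b - t) := by
    intro t ht
    obtain ⟨hat, htm⟩ := ht
    set s : ℝ := a + b - t with hs
    have hts : t ≤ s := by rw [hs, hm] at *; linarith
    have hsb : s ≤ b := by rw [hs]; linarith
    have htb : t ≤ b := hts.trans hsb
    have has : a ≤ s := hat.trans hts
    have h1 : V f a t + V f t b = V f a b := V_add hat htb hfin
    have h2 : V f t s + V f s b = V f t b := V_add hts hsb (hfin' t b hat le_rfl)
    have h3 : |f a - f t| ≤ V f a t :=
      abs_sub_le_V (hfin' a t le_rfl htb) ⟨le_rfl, hat⟩ ⟨hat, le_rfl⟩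
    have h4 : |f s - f b| ≤ V f s b :=
      abs_sub_le_V (hfin' s b has le_rfl) ⟨le_rfl, hsb⟩ ⟨hsb, le_rfl⟩
    have h5 : |g t| ≤ |f a - f t| + |f s - f b| := by
      have : g t = (f a - f t) + (f b - f s) := by rw [hg]; ring
      rw [this]
      calc |(f a - f t) + (f b - f s)| ≤ |f a - f t| + |f b - f s| := abs_add_le _ _
        _ = |f a - f t| + |f s - f b| := by rw [abs_sub_comm (f b) (f s)]
    linarith
  -- integral identities
  have hrefl_int : (∫ t in a..m, f (a + b - t)) = ∫ t in m..b, f t := by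
    rw [intervalIntegral.integral_comp_sub_left f (a + b)]
    have e1 : a + b - m = m := by rw [hm]; ring
    have e2 : a + b - a = b := by ring
    rw [e1, e2]
  have hsplit : (∫ t in a..b, f t) = (∫ t in a..m, f t) + ∫ t in m..b, f t :=
    (intervalIntegral.integral_add_adjacent_intervals (hfint a m le_rfl ham hmb)
      (hfint m b ham hmb le_rfl)).symm
  have hgaux : (∫ t in a..m, g t) =
      (m - a) * (f a + f b) - (∫ t in a..m, f t) - ∫ t in a..m, f (a + b - t) := by
    rw [hg, intervalIntegral.integral_sub (intervalIntegrable_const.sub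
      (hfint a m le_rfl ham hmb)) hrefl,
      intervalIntegral.integral_sub intervalIntegrable_const (hfint a m le_rfl ham hmb),
      intervalIntegral.integral_const]
    simp only [smul_eq_mul]
  have hkey : (f a + f b) / 2 - (1 / (b - a)) * ∫ t in a..b, f t
      = (1 / (b - a)) * ∫ t in a..m, g t := by
    rw [hgaux, hrefl_int, hsplit]
    have : m - a = (b - a) / 2 := by rw [hm]; ring
    rw [this]
    field_simp
    ring
  -- the bound on the integral of g
  have hhint : IntervalIntegrable (fun t => V f a b - V f t (a + b - t))
      MeasureTheory.volume a m := intervalIntegrable_const.sub hVint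
  have habs : |∫ t in a..m, g t| ≤ ∫ t in a..m, (V f a b - V f t (a + b - t)) := by
    calc |∫ t in a..m, g t| ≤ ∫ t in a..m, |g t| :=
          intervalIntegral.abs_integral_le_integral_abs ham
      _ ≤ ∫ t in a..m, (V f a b - V f t (a + b - t)) :=
          intervalIntegral.integral_mono_on ham hgint.abs hhint hpt
  have hhval : (∫ t in a..m, (V f a b - V f t (a + b - t)))
      = (m - a) * V f a b - ∫ t in a..m, V f t (a + b - t) := by
    rw [intervalIntegral.integral_sub intervalIntegrable_const hVint,
      intervalIntegral.integral_const]
    simp only [smul_eq_mul]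
  constructor
  · rw [hkey, abs_mul, abs_of_pos (by positivity : (0:ℝ) < 1 / (b - a))]
    calc (1 / (b - a)) * |∫ t in a..m, g t|
        ≤ (1 / (b - a)) * ∫ t in a..m, (V f a b - V f t (a + b - t)) := by
          apply mul_le_mul_of_nonneg_left habs (by positivity)
      _ = (1 / 2) * V f a b - (1 / (b - a)) * ∫ t in a..m, V f t (a + b - t) := by
          rw [hhval]
          have : m - a = (b - a) / 2 := by rw [hm]; ring
          rw [this]
          field_simp
  · have hnn : 0 ≤ ∫ t in a..m, V f t (a + b - t) :=
      intervalIntegral.integral_nonneg ham (fun u _ => V_nonneg f u (a + b - u))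
    have : 0 ≤ (1 / (b - a)) * ∫ t in a..m, V f t (a + b - t) :=
      mul_nonneg (by positivity) hnn
    linarith
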